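/- McDiarmid's counterexample: let M be the graphic matroid on the multigraph obtained from K_4 on vertices {1,2,3,4} by duplicating the three edges incident to vertex 4, with edge set {12, 13, 14, 23, 24, 34, 14', 24', 34'}. With I_1 = {14, 14', 23}, I_2 = {24, 24', 13}, I_3 = {34, 34', 12}, M has rank 3, is a disjoint union of 3 bases, the I_i are pairwise disjoint sets of size 3, but there is no 3×3 grid containing each element exactly once with row i equal to I_i and every column a basis of M. (Note: here the I_i are not independent, since each contains a pair of parallel edges.) -/

import Mathlib

/-!
A set of edges of a simple graph is independent in its cycle matroid when it spans an acyclic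
subgraph; augmentation holds because a maximal acyclic edge set connects the ends of every edge,
so one of its edges joins two components of any non-maximal acyclic set. The matroid of the
multigraph is the comap of the cycle matroid of `K₄` along the endpoint map, parallel edges being
exactly the failures of injectivity.

Row `I_i` consists of two parallel copies of the edge `i4` and of the side of the triangle `123`
opposite `i`. A column containing exactly one of these three opposite sides, say `jk`, also
contains edges `j4` and `k4`, hence the triangle `jk4`; a column containing all three is the
triangle `123`. Three opposite sides in three columns force one of these two cases.
-/

open Set Function Matroid SimpleGraph

/-- The endpoint map of McDiarmid's multigraph: `K₄` on `{0,1,2,3}` (vertex `3`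
playing the role of vertex `4`) with the three edges at vertex `3` duplicated.
Edges `0..8` are `12, 13, 14, 23, 24, 34, 14', 24', 34'`. -/
def mcdEnds : Fin 9 → Sym2 (Fin 4) :=
  ![s(0, 1), s(0, 2), s(0, 3), s(1, 2), s(1, 3), s(2, 3), s(0, 3), s(1, 3), s(2, 3)]

/-- A set of multigraph edges is acyclic: no two parallel edges, and the
underlying simple graph is acyclic. -/
def McdAcyclic (S : Set (Fin 9)) : Prop :=
  Set.InjOn mcdEnds S ∧ (SimpleGraph.fromEdgeSet (mcdEnds '' S)).IsAcyclic

/-- A spanning tree of McDiarmid's multigraph (as a set of edges). -/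
def McdSpanningTree (T : Set (Fin 9)) : Prop :=
  McdAcyclic T ∧ (SimpleGraph.fromEdgeSet (mcdEnds '' T)).Connected

/-- The row sets `I₁ = {14, 14', 23}`, `I₂ = {24, 24', 13}`, `I₃ = {34, 34', 12}`. -/
def mcdRows : Fin 3 → Set (Fin 9) :=
  ![{2, 6, 3}, {4, 7, 1}, {5, 8, 0}]


namespace SimpleGraph

variable {V : Type*} {G H : SimpleGraph V}

lemma reachable_le_of_adj_le_reachable (h : G.Adj ≤ H.Reachable) :
    G.Reachable ≤ H.Reachable := by
  simpa only [← reachable_eq_reflTransGen] using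
    Relation.reflTransGen_closed (h.trans_eq reachable_eq_reflTransGen)

lemma isAcyclic_fromEdgeSet_insert_iff {I : Set (Sym2 V)} {u v : V} (huv : u ≠ v)
    (hI : s(u, v) ∉ I) :
    (fromEdgeSet (insert s(u, v) I)).IsAcyclic ↔
      (fromEdgeSet I).IsAcyclic ∧ ¬ (fromEdgeSet I).Reachable u v := by
  rw [Set.insert_eq, Set.union_comm, fromEdgeSet_union, ← edge, isAcyclic_sup_fromEdgeSet_iff]
  simp [fromEdgeSet_adj, huv, hI]

lemma IsAcyclic.not_adj_of_adj_of_adj (hG : G.IsAcyclic) {a b c : V} (hab : G.Adj a b)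
    (hbc : G.Adj b c) : ¬ G.Adj a c := by
  classical
  exact fun hac ↦ hG.cliqueFree le_rfl {a, b, c} (is3Clique_triple_iff.2 ⟨hab, hac, hbc⟩)

variable (G) in
def IsAcyclicEdgeSet (I : Set (Sym2 V)) : Prop :=
  I ⊆ G.edgeSet ∧ (fromEdgeSet I).IsAcyclic

lemma IsAcyclicEdgeSet.anti {I J : Set (Sym2 V)} (hJ : G.IsAcyclicEdgeSet J) (hIJ : I ⊆ J) :
    G.IsAcyclicEdgeSet I :=
  ⟨hIJ.trans hJ.1, hJ.2.anti (fromEdgeSet_mono hIJ)⟩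

lemma IsAcyclicEdgeSet.insert_iff {I : Set (Sym2 V)} (hI : G.IsAcyclicEdgeSet I) {u v : V}
    (huv : G.Adj u v) (hnI : s(u, v) ∉ I) :
    G.IsAcyclicEdgeSet (insert s(u, v) I) ↔ ¬ (fromEdgeSet I).Reachable u v := by
  rw [IsAcyclicEdgeSet, Set.insert_subset_iff, isAcyclic_fromEdgeSet_insert_iff huv.ne hnI]
  simp [huv, hI.1, hI.2]

lemma reachable_le_of_maximal_isAcyclicEdgeSet {B : Set (Sym2 V)}
    (hB : Maximal G.IsAcyclicEdgeSet B) : G.Reachable ≤ (fromEdgeSet B).Reachable := by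
  refine reachable_le_of_adj_le_reachable fun u v huv ↦ ?_
  by_cases huvB : s(u, v) ∈ B
  · exact Adj.reachable (by simp [fromEdgeSet_adj, huvB, huv.ne])
  by_contra hnr
  exact huvB (hB.2 ((hB.1.insert_iff huv huvB).2 hnr) (Set.subset_insert _ _) (Set.mem_insert _ _))

lemma IsAcyclicEdgeSet.exists_insert_of_not_maximal {I B : Set (Sym2 V)}
    (hI : G.IsAcyclicEdgeSet I) (hInotmax : ¬ Maximal G.IsAcyclicEdgeSet I)
    (hB : Maximal G.IsAcyclicEdgeSet B) : ∃ x ∈ B \ I, G.IsAcyclicEdgeSet (insert x I) := by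
  obtain ⟨e, heI, he⟩ :=
    Set.exists_insert_of_not_maximal (fun _ _ ↦ IsAcyclicEdgeSet.anti) hI hInotmax
  induction e using Sym2.ind with | h u v => ?_
  have huv : G.Adj u v := he.1 (Set.mem_insert _ _)
  by_contra! hB_closed
  have hBI : (fromEdgeSet B).Adj ≤ (fromEdgeSet I).Reachable := by
    intro a b hab
    rw [fromEdgeSet_adj] at hab
    by_cases habI : s(a, b) ∈ I
    · exact Adj.reachable (by simp [fromEdgeSet_adj, habI, hab.2])
    · simpa [hI.insert_iff (hB.1.1 hab.1) habI] using hB_closed _ ⟨hab.1, habI⟩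
  exact (hI.insert_iff huv heI).1 he <| reachable_le_of_adj_le_reachable hBI u v <|
    reachable_le_of_maximal_isAcyclicEdgeSet hB u v huv.reachable

variable (G) in
def cycleMatroid [Finite V] : Matroid (Sym2 V) :=
  IndepMatroid.matroid <| IndepMatroid.ofBdd G.edgeSet G.IsAcyclicEdgeSet
    ⟨Set.empty_subset _, by simp⟩
    (fun _ _ ↦ IsAcyclicEdgeSet.anti)
    (fun _ _ ↦ IsAcyclicEdgeSet.exists_insert_of_not_maximal)
    (fun _ hI ↦ hI.1)
    ⟨Nat.card (Sym2 V), fun _ _ ↦ ENat.card_eq_coe_natCard (Sym2 V) ▸ Set.encard_le_card⟩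

section cycleMatroid

variable [Finite V]

@[simp] lemma cycleMatroid_ground : G.cycleMatroid.E = G.edgeSet := rfl

@[simp] lemma cycleMatroid_indep {I : Set (Sym2 V)} :
    G.cycleMatroid.Indep I ↔ G.IsAcyclicEdgeSet I := Iff.rfl

lemma cycleMatroid_isBase_iff (hG : G.Connected) {B : Set (Sym2 V)} :
    G.cycleMatroid.IsBase B ↔ B ⊆ G.edgeSet ∧ (fromEdgeSet B).IsTree := by
  rw [cycleMatroid, IndepMatroid.matroid_IsBase]
  refine ⟨fun hB ↦ ⟨hB.1.1, ⟨?_, hB.1.2⟩⟩, fun ⟨hBG, hT⟩ ↦ ⟨⟨hBG, hT.isAcyclic⟩, ?_⟩⟩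
  · have := hG.nonempty
    exact ⟨fun u v ↦ reachable_le_of_maximal_isAcyclicEdgeSet hB u v (hG.preconnected u v)⟩
  · intro J hJ hBJ e heJ
    induction e using Sym2.ind with | h u v => ?_
    by_contra heB
    exact (IsAcyclicEdgeSet.insert_iff ⟨hBG, hT.isAcyclic⟩ (hJ.1 heJ) heB).1
      (hJ.anti (Set.insert_subset heJ hBJ)) (hT.connected.preconnected u v)

lemma cycleMatroid_isBase_iff_connected (hG : G.Connected) {B : Set (Sym2 V)} :
    G.cycleMatroid.IsBase B ↔
      B ⊆ G.edgeSet ∧ (fromEdgeSet B).Connected ∧ B.ncard + 1 = Nat.card V := by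
  rw [cycleMatroid_isBase_iff hG, isTree_iff_connected_and_card, edgeSet_fromEdgeSet]
  refine and_congr_right fun hBG ↦ ?_
  have hBdiag : B \ Sym2.diagSet = B :=
    sdiff_eq_left.2 (Set.disjoint_left.2 fun _ he ↦ G.not_isDiag_of_mem_edgeSet (hBG he))
  rw [hBdiag, Nat.card_coe_set_eq]

end cycleMatroid

end SimpleGraph

lemma Matroid.comap_isBase_iff_of_range_eq {α β : Type*} {N : Matroid β} {f : α → β}
    (hf : range f = N.E) {B : Set α} :
    (N.comap f).IsBase B ↔ N.IsBase (f '' B) ∧ InjOn f B := by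
  rw [comap_isBase_iff, image_preimage_eq_inter_range, hf, inter_self, isBasis_ground_iff,
    ← hf, preimage_range, and_iff_left (subset_univ B)]

def mcdMatroid : Matroid (Fin 9) := (⊤ : SimpleGraph (Fin 4)).cycleMatroid.comap mcdEnds

lemma range_mcdEnds : range mcdEnds = (⊤ : SimpleGraph (Fin 4)).edgeSet := by
  ext e
  rw [edgeSet_top, mem_compl_iff, Sym2.mem_diagSet]
  revert e
  decide

lemma mcdMatroid_ground : mcdMatroid.E = univ := by
  rw [mcdMatroid, comap_ground_eq, cycleMatroid_ground, ← range_mcdEnds, preimage_range]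

lemma mcdMatroid_indep_iff {S : Set (Fin 9)} : mcdMatroid.Indep S ↔ McdAcyclic S := by
  rw [mcdMatroid, comap_indep_iff, cycleMatroid_indep, IsAcyclicEdgeSet, ← range_mcdEnds,
    and_iff_right (image_subset_range _ _), and_comm, McdAcyclic]

lemma mcdMatroid_isBase_iff {B : Set (Fin 9)} :
    mcdMatroid.IsBase B ↔
      InjOn mcdEnds B ∧ (fromEdgeSet (mcdEnds '' B)).Connected ∧ B.ncard = 3 := by
  rw [mcdMatroid, comap_isBase_iff_of_range_eq range_mcdEnds,
    cycleMatroid_isBase_iff_connected connected_top, ← range_mcdEnds, Nat.card_eq_fintype_card,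
    Fintype.card_fin]
  refine ⟨fun ⟨⟨_, hconn, hcard⟩, hinj⟩ ↦ ⟨hinj, hconn, ?_⟩,
    fun ⟨hinj, hconn, hcard⟩ ↦ ⟨⟨image_subset_range _ _, hconn, ?_⟩, hinj⟩⟩ <;>
  rw [hinj.ncard_image] at * <;> omega

def mcdBases : Fin 3 → Set (Fin 9) := ![{0, 5, 6}, {1, 3, 7}, {2, 4, 8}]

lemma mcdBases_isBase (j : Fin 3) : mcdMatroid.IsBase (mcdBases j) := by
  rw [mcdMatroid_isBase_iff]
  fin_cases j <;>
    simp only [mcdBases, Fin.zero_eta, Fin.mk_one, Fin.reduceFinMk, Matrix.cons_val] <;>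
  refine ⟨by simp [InjOn, mcdEnds], by simp only [image_insert_eq, image_singleton]; decide,
    by simp [ncard_insert_of_notMem]⟩

/-- The edge of `mcdRows i` that avoids vertex `3`: the side of the triangle `{0, 1, 2}`
opposite `i`. -/
def mcdOpposite : Fin 3 → Fin 9 := ![3, 1, 0]

lemma mcdOpposite_mem_mcdRows (i : Fin 3) : mcdOpposite i ∈ mcdRows i := by
  fin_cases i <;> simp [mcdOpposite, mcdRows]

lemma mcdEnds_of_mem_mcdRows {i : Fin 3} {x : Fin 9} (hx : x ∈ mcdRows i)
    (hxi : x ≠ mcdOpposite i) : mcdEnds x = s(i.castSucc, 3) := by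
  fin_cases i <;> simp only [mcdRows, mcdOpposite, Fin.zero_eta, Fin.mk_one, Fin.reduceFinMk,
    Matrix.cons_val, mem_insert_iff, mem_singleton_iff] at hx hxi <;>
  rcases hx with rfl | rfl | rfl <;> first | rfl | exact absurd rfl hxi

lemma exists_not_mcdAcyclic_column (g : Fin 3 → Fin 3 → Fin 9)
    (hg : Injective fun p : Fin 3 × Fin 3 ↦ g p.1 p.2)
    (hrows : ∀ i, {x | ∃ j, g i j = x} = mcdRows i) :
    ∃ j, ¬ McdAcyclic {x | ∃ i, g i j = x} := by
  choose c hc using fun i ↦ (hrows i).symm ▸ mcdOpposite_mem_mcdRows i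
  have hopp : ∀ i, mcdEnds (g i (c i)) = mcdEnds (mcdOpposite i) := fun i ↦ by rw [hc i]
  have hleg : ∀ i j, j ≠ c i → mcdEnds (g i j) = s(i.castSucc, 3) := fun i j hj ↦
    mcdEnds_of_mem_mcdRows (hrows i ▸ ⟨j, rfl⟩) fun h ↦
      hj (congrArg Prod.snd (hg (a₁ := (i, j)) (a₂ := (i, c i)) (h.trans (hc i).symm)))
  by_contra! hacyc
  have hadj : ∀ i j {a b : Fin 4}, a ≠ b → mcdEnds (g i j) = s(a, b) →
      (fromEdgeSet (mcdEnds '' {x | ∃ i, g i j = x})).Adj a b := fun i j _ _ hab h ↦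
    (fromEdgeSet_adj _).2 ⟨⟨g i j, ⟨i, rfl⟩, h⟩, hab⟩
  obtain ⟨h01, h12⟩ | ⟨h01, h02⟩ | ⟨h10, h12⟩ | ⟨h20, h21⟩ :
      (c 0 = c 1 ∧ c 1 = c 2) ∨ (c 0 ≠ c 1 ∧ c 0 ≠ c 2) ∨ (c 1 ≠ c 0 ∧ c 1 ≠ c 2) ∨
        (c 2 ≠ c 0 ∧ c 2 ≠ c 1) := by grind
  · exact (hacyc (c 0)).2.not_adj_of_adj_of_adj (hadj 2 _ (by decide) (h01 ▸ h12 ▸ hopp 2))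
      (hadj 0 _ (by decide) (hopp 0)) (hadj 1 _ (by decide) (h01 ▸ hopp 1))
  · exact (hacyc (c 0)).2.not_adj_of_adj_of_adj (hadj 0 _ (by decide) (hopp 0))
      (hadj 2 _ (by decide) (hleg 2 _ h02)) (hadj 1 _ (by decide) (hleg 1 _ h01))
  · exact (hacyc (c 1)).2.not_adj_of_adj_of_adj (hadj 1 _ (by decide) (hopp 1))
      (hadj 2 _ (by decide) (hleg 2 _ h12)) (hadj 0 _ (by decide) (hleg 0 _ h10))
  · exact (hacyc (c 2)).2.not_adj_of_adj_of_adj (hadj 2 _ (by decide) (hopp 2))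
      (hadj 1 _ (by decide) (hleg 1 _ h21)) (hadj 0 _ (by decide) (hleg 0 _ h20))

/-- McDiarmid's counterexample: the graphic matroid of the multigraph has rank 3
and is a disjoint union of 3 bases, the `I_i` are pairwise disjoint 3-sets, but
no `3 × 3` grid has row `i` equal to `I_i` and all columns bases. -/
theorem mcdiarmid_counterexample :
    ∃ M : Matroid (Fin 9),
      M.E = univ ∧
      (∀ S, M.Indep S ↔ McdAcyclic S) ∧
      (∀ B, M.IsBase B → B.ncard = 3) ∧
      (∃ B : Fin 3 → Set (Fin 9), (∀ j, M.IsBase (B j)) ∧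
        Pairwise (Function.onFun Disjoint B) ∧ (⋃ j, B j) = univ) ∧
      Pairwise (Function.onFun Disjoint mcdRows) ∧
      (∀ i, (mcdRows i).ncard = 3) ∧
      ¬ ∃ g : Fin 3 → Fin 3 → Fin 9,
          Function.Injective (fun p : Fin 3 × Fin 3 => g p.1 p.2) ∧
          (∀ i, {x | ∃ j, g i j = x} = mcdRows i) ∧
          (∀ j, M.IsBase {x | ∃ i, g i j = x}) := by
  refine ⟨mcdMatroid, mcdMatroid_ground, fun _ ↦ mcdMatroid_indep_iff,
    fun _ hB ↦ (mcdMatroid_isBase_iff.1 hB).2.2, ⟨mcdBases, mcdBases_isBase, ?_, ?_⟩, ?_,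
    fun i ↦ by fin_cases i <;> simp [mcdRows, ncard_insert_of_notMem], ?_⟩
  · intro i j hij
    fin_cases i <;> fin_cases j <;> simp_all [mcdBases, onFun]
  · ext x
    fin_cases x <;> simp [mcdBases, Fin.exists_fin_succ]
  · intro i j hij
    fin_cases i <;> fin_cases j <;> simp_all [mcdRows, onFun]
  · rintro ⟨g, hg, hrows, hcols⟩
    obtain ⟨j, hj⟩ := exists_not_mcdAcyclic_column g hg hrows
    exact hj (mcdMatroid_indep_iff.1 (hcols j).indep)
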